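/- arXiv:2101.01696 — 4 statements merged into one kernel-verified Lean document; each statement's English description precedes it below -/
import Mathlib

section
/- Define ζ(t)² = 1 + 2M²k²/p(t,k,η)² where p(t,k,η) = k² + (η−kt)². Then for all t ≥ 0, 1 ≤ ζ(t)² ≤ 1 + 2M², and the total variation of log ζ over [0,∞) is bounded: ∫₀^∞ |d/dt log ζ(t)| dt ≤ log(1 + 2M²). -/
/-!
`log ζ = log (ζ²) / 2`, and `ζ²` depends on `t` only through `p`, decreasingly. Since `p` decreases
on `(0, η/k]` and increases afterwards, `log ζ` increases on `[0, c]` and decreases on `[c, ∞)`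
for `c = max 0 (η/k)`, so its total variation is `2 log ζ(c) - log ζ(0) - lim log ζ`. The limit
is `0` because `p → ∞`, `log ζ(0) ≥ 0`, and `log ζ(c) ≤ log(1 + 2M²)/2` by the bound on `ζ²`.
-/

open Real Set Filter Topology MeasureTheory

theorem integral_Ioi_abs_eq_of_hasDerivAt_of_unimodal {f f' : ℝ → ℝ} {a c L : ℝ} (hac : a ≤ c)
    (hderiv : ∀ x ∈ Ici a, HasDerivAt f (f' x) x)
    (hmono : ∀ x ∈ Ioc a c, 0 ≤ f' x) (hanti : ∀ x ∈ Ioi c, f' x ≤ 0)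
    (hf : Tendsto f atTop (𝓝 L)) :
    ∫ x in Ioi a, |f' x| = (f c - f a) + (f c - L) := by
  have hderiv_c : ∀ x ∈ Ici c, HasDerivAt f (f' x) x := fun x hx => hderiv x (hac.trans hx)
  have hcont : ContinuousOn f (Icc a c) := fun x hx =>
    (hderiv x hx.1).continuousAt.continuousWithinAt
  have hint_left : IntegrableOn f' (Ioc a c) :=
    intervalIntegral.integrableOn_deriv_of_nonneg hcont (fun x hx => hderiv x hx.1.le)
      (fun x hx => hmono x (Ioo_subset_Ioc_self hx))
  have hint_right : IntegrableOn f' (Ioi c) := integrableOn_Ioi_deriv_of_nonpos' hderiv_c hanti hf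
  have hleft : ∫ x in Ioc a c, |f' x| = f c - f a := by
    rw [setIntegral_congr_fun measurableSet_Ioc fun x hx => abs_of_nonneg (hmono x hx),
      ← intervalIntegral.integral_of_le hac]
    exact intervalIntegral.integral_eq_sub_of_hasDerivAt_of_le hac hcont
      (fun x hx => hderiv x hx.1.le)
      ((intervalIntegrable_iff_integrableOn_Ioc_of_le hac).2 hint_left)
  have hright : ∫ x in Ioi c, |f' x| = f c - L := by
    rw [setIntegral_congr_fun measurableSet_Ioi fun x hx => abs_of_nonpos (hanti x hx),
      integral_neg, integral_Ioi_of_hasDerivAt_of_nonpos' hderiv_c hanti hf, neg_sub]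
  rw [← Ioc_union_Ioi_eq_Ioi hac, setIntegral_union (Ioc_disjoint_Ioi le_rfl) measurableSet_Ioi
    hint_left.abs hint_right.abs, hleft, hright]

theorem HasDerivAt.log_sqrt {g : ℝ → ℝ} {g' x : ℝ} (hg : HasDerivAt g g' x) (hx : 0 < g x) :
    HasDerivAt (fun y => Real.log √(g y)) (g' / (2 * g x)) x := by
  have hsqrt : 0 < √(g x) := sqrt_pos.2 hx
  convert (hg.sqrt hx.ne').log hsqrt.ne' using 1
  field_simp
  rw [sq_sqrt hx.le]

theorem tendsto_sub_mul_sq_atTop {a : ℝ} (ha : a ≠ 0) (b : ℝ) :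
    Tendsto (fun t => (b - a * t) ^ 2) atTop atTop := by
  have h : Tendsto (fun t => a ^ 2 * (t - b / a) ^ 2) atTop atTop :=
    ((tendsto_pow_atTop two_ne_zero).comp (tendsto_atTop_add_const_right _ _ tendsto_id))
      |>.const_mul_atTop (by positivity)
  refine h.congr fun t => ?_
  field_simp
  ring

noncomputable def shearSymbol (k η t : ℝ) : ℝ := k ^ 2 + (η - k * t) ^ 2

noncomputable def zetaSq (M k η t : ℝ) : ℝ := 1 + 2 * M ^ 2 * k ^ 2 / shearSymbol k η t ^ 2

section

variable {M k η : ℝ}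

theorem sq_le_shearSymbol (t : ℝ) : k ^ 2 ≤ shearSymbol k η t :=
  le_add_of_nonneg_right (sq_nonneg _)

theorem shearSymbol_pos (hk : k ≠ 0) (t : ℝ) : 0 < shearSymbol k η t :=
  (show 0 < k ^ 2 by positivity).trans_le (sq_le_shearSymbol t)

theorem hasDerivAt_shearSymbol (hk : k ≠ 0) (t : ℝ) :
    HasDerivAt (shearSymbol k η) (2 * k ^ 2 * (t - η / k)) t := by
  have h : HasDerivAt (shearSymbol k η) _ t :=
    ((((hasDerivAt_id t).const_mul k).const_sub η).pow 2).const_add (k ^ 2)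
  refine h.congr_deriv ?_
  simp only [id]
  field_simp
  ring

theorem tendsto_shearSymbol_atTop (hk : k ≠ 0) : Tendsto (shearSymbol k η) atTop atTop :=
  tendsto_atTop_add_const_left _ _ (tendsto_sub_mul_sq_atTop hk η)

theorem one_le_zetaSq (t : ℝ) : 1 ≤ zetaSq M k η t :=
  le_add_of_nonneg_right (by positivity)

/-- The maximum is attained at `t = η / k`, where `p = k²`. -/
theorem zetaSq_le (hk : k ≠ 0) (t : ℝ) : zetaSq M k η t ≤ 1 + 2 * M ^ 2 / k ^ 2 := by
  have hp : (k ^ 2) ^ 2 ≤ shearSymbol k η t ^ 2 :=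
    pow_le_pow_left₀ (sq_nonneg k) (sq_le_shearSymbol t) 2
  calc zetaSq M k η t ≤ 1 + 2 * M ^ 2 * k ^ 2 / (k ^ 2) ^ 2 := by unfold zetaSq; gcongr
    _ = 1 + 2 * M ^ 2 / k ^ 2 := by field_simp

theorem hasDerivAt_zetaSq (hk : k ≠ 0) (t : ℝ) :
    HasDerivAt (zetaSq M k η)
      (-(4 * M ^ 2 * k ^ 2) * (2 * k ^ 2 * (t - η / k)) / shearSymbol k η t ^ 3) t := by
  have hp := shearSymbol_pos (η := η) hk t
  have h : HasDerivAt (zetaSq M k η) _ t :=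
    ((hasDerivAt_const t (2 * M ^ 2 * k ^ 2)).div ((hasDerivAt_shearSymbol hk t).pow 2)
      (pow_ne_zero 2 hp.ne')).const_add 1
  refine h.congr_deriv ?_
  simp only [Pi.pow_apply]
  field_simp
  ring

theorem deriv_zetaSq_nonneg (hk : k ≠ 0) {t : ℝ} (ht : t ≤ η / k) :
    0 ≤ deriv (zetaSq M k η) t := by
  have hp := shearSymbol_pos (η := η) hk t
  rw [(hasDerivAt_zetaSq hk t).deriv]
  refine div_nonneg (mul_nonneg_of_nonpos_of_nonpos ?_ ?_) (by positivity)
  · have : 0 ≤ 4 * M ^ 2 * k ^ 2 := by positivity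
    linarith
  · exact mul_nonpos_of_nonneg_of_nonpos (by positivity) (by linarith)

theorem deriv_zetaSq_nonpos (hk : k ≠ 0) {t : ℝ} (ht : η / k ≤ t) :
    deriv (zetaSq M k η) t ≤ 0 := by
  have hp := shearSymbol_pos (η := η) hk t
  rw [(hasDerivAt_zetaSq hk t).deriv]
  refine div_nonpos_of_nonpos_of_nonneg (mul_nonpos_of_nonpos_of_nonneg ?_ ?_) (by positivity)
  · have : 0 ≤ 4 * M ^ 2 * k ^ 2 := by positivity
    linarith
  · exact mul_nonneg (by positivity) (by linarith)

theorem zetaSq_intCast_le {k : ℤ} (hk : k ≠ 0) (t : ℝ) : zetaSq M k η t ≤ 1 + 2 * M ^ 2 := by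
  have hk2 : (1 : ℝ) ≤ (k : ℝ) ^ 2 := mod_cast (one_le_sq_iff_one_le_abs _).2 (Int.one_le_abs hk)
  refine (zetaSq_le (Int.cast_ne_zero.2 hk) t).trans ?_
  gcongr
  exact div_le_self (by positivity) hk2

theorem tendsto_zetaSq_atTop (hk : k ≠ 0) : Tendsto (zetaSq M k η) atTop (𝓝 1) := by
  have h := (tendsto_const_nhds (x := 2 * M ^ 2 * k ^ 2) |>.div_atTop
    ((tendsto_pow_atTop two_ne_zero).comp (tendsto_shearSymbol_atTop (η := η) hk))).const_add 1
  rwa [add_zero] at h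

end

theorem stmt_3_general (M : ℝ) (k : ℤ) (hk : k ≠ 0) (η : ℝ) :
    (∀ t : ℝ, 0 ≤ t →
      1 ≤ (Real.sqrt (1 + 2 * M ^ 2 * (k : ℝ) ^ 2 /
              ((k : ℝ) ^ 2 + (η - k * t) ^ 2) ^ 2)) ^ 2 ∧
      (Real.sqrt (1 + 2 * M ^ 2 * (k : ℝ) ^ 2 /
              ((k : ℝ) ^ 2 + (η - k * t) ^ 2) ^ 2)) ^ 2 ≤ 1 + 2 * M ^ 2) ∧
    (∫ t in Set.Ioi (0 : ℝ),
        |deriv (fun s : ℝ => Real.log (Real.sqrt (1 + 2 * M ^ 2 * (k : ℝ) ^ 2 /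
            ((k : ℝ) ^ 2 + (η - k * s) ^ 2) ^ 2))) t|) ≤
      Real.log (1 + 2 * M ^ 2) := by
  have hk' : (k : ℝ) ≠ 0 := Int.cast_ne_zero.2 hk
  have hζ_pos (t : ℝ) : 0 < zetaSq M k η t := one_pos.trans_le (one_le_zetaSq t)
  change (∀ t : ℝ, 0 ≤ t → 1 ≤ √(zetaSq M k η t) ^ 2 ∧ √(zetaSq M k η t) ^ 2 ≤ 1 + 2 * M ^ 2) ∧
    ∫ t in Ioi 0, |deriv (fun s => Real.log √(zetaSq M k η s)) t| ≤ Real.log (1 + 2 * M ^ 2)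
  refine ⟨fun t _ => ?_, ?_⟩
  · rw [sq_sqrt (hζ_pos t).le]
    exact ⟨one_le_zetaSq t, zetaSq_intCast_le hk t⟩
  set f := fun s => Real.log √(zetaSq M k η s)
  have hf (t : ℝ) : HasDerivAt f (deriv (zetaSq M k η) t / (2 * zetaSq M k η t)) t :=
    ((hasDerivAt_zetaSq hk' t).differentiableAt.hasDerivAt).log_sqrt (hζ_pos t)
  have hf_bounds (t : ℝ) : 0 ≤ f t ∧ 2 * f t ≤ Real.log (1 + 2 * M ^ 2) := by
    simp only [f, log_sqrt (hζ_pos t).le]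
    exact ⟨div_nonneg (log_nonneg (one_le_zetaSq t)) zero_le_two,
      by linarith [log_le_log (hζ_pos t) (zetaSq_intCast_le hk t)]⟩
  have hf_lim : Tendsto f atTop (𝓝 0) := by
    simpa using (tendsto_zetaSq_atTop hk').sqrt.log (by simp)
  rw [funext fun t => (hf t).deriv, integral_Ioi_abs_eq_of_hasDerivAt_of_unimodal
    (le_max_left 0 (η / k)) (fun t _ => hf t) ?_ ?_ hf_lim]
  · linarith [hf_bounds 0, hf_bounds (max 0 (η / k))]
  · exact fun t ht => div_nonneg (deriv_zetaSq_nonneg hk' ((le_max_iff.1 ht.2).resolve_left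
      ht.1.not_ge)) (by linarith [hζ_pos t])
  · exact fun t ht => div_nonpos_of_nonpos_of_nonneg
      (deriv_zetaSq_nonpos hk' ((le_max_right _ _).trans (le_of_lt ht))) (by linarith [hζ_pos t])

/-- With `ζ(t)² = 1 + 2M²k²/p(t)²`, `p(t) = k² + (η−kt)²`: for all `t ≥ 0`,
`1 ≤ ζ(t)² ≤ 1 + 2M²`, and the total variation of `log ζ` on `(0,∞)` is at most
`log(1 + 2M²)`. -/
theorem stmt_3 (M : ℝ) (hM : 0 < M) (k : ℤ) (hk : k ≠ 0) (η : ℝ) :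
    (∀ t : ℝ, 0 ≤ t →
      1 ≤ (Real.sqrt (1 + 2 * M ^ 2 * (k : ℝ) ^ 2 /
              ((k : ℝ) ^ 2 + (η - k * t) ^ 2) ^ 2)) ^ 2 ∧
      (Real.sqrt (1 + 2 * M ^ 2 * (k : ℝ) ^ 2 /
              ((k : ℝ) ^ 2 + (η - k * t) ^ 2) ^ 2)) ^ 2 ≤ 1 + 2 * M ^ 2) ∧
    (∫ t in Set.Ioi (0 : ℝ),
        |deriv (fun s : ℝ => Real.log (Real.sqrt (1 + 2 * M ^ 2 * (k : ℝ) ^ 2 /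
            ((k : ℝ) ^ 2 + (η - k * s) ^ 2) ^ 2))) t|) ≤
      Real.log (1 + 2 * M ^ 2) :=
  stmt_3_general M k hk η
end

section
/- The Fourier multiplier m(t,k,η) = exp(2 arctan(ν^{1/3}(t − η/k))) satisfies, for all t ≥ 0 and nonzero integer k and real η: (i) e^{−π} ≤ m(t,k,η) ≤ e^{π}; (ii) ∂ₜm/m = 2ν^{1/3}/(ν^{2/3}(t − η/k)² + 1); (iii) ν·p(t,k,η) + (∂ₜm/m)(t,k,η) ≥ ν^{1/3}, where p(t,k,η) = k² + (η − kt)². -/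
/-! With `a = ν^{1/3}` and `x = t − η/k`, the multiplier is `exp (2 arctan (a x))`, so (i) is
`|arctan| < π/2` and (ii) is the chain rule. For (iii), note `ν p = a³ k² (1 + x²)` and
`∂ₜm/m = 2a / (a²x² + 1)`: if `a²x² ≤ 1` the second term alone is `≥ a`, otherwise
`a³k²x² ≥ a · a²x² ≥ a`. -/

open Real

lemma exp_neg_pi_le_exp_two_mul_arctan (x : ℝ) : exp (-π) ≤ exp (2 * arctan x) := by
  have := neg_pi_div_two_lt_arctan x
  gcongr
  linarith

lemma exp_two_mul_arctan_le_exp_pi (x : ℝ) : exp (2 * arctan x) ≤ exp π := by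
  have := arctan_lt_pi_div_two x
  gcongr
  linarith

lemma hasDerivAt_exp_two_mul_arctan_mul_sub (a c t : ℝ) :
    HasDerivAt (fun s ↦ exp (2 * arctan (a * (s - c))))
      (2 * a / (a ^ 2 * (t - c) ^ 2 + 1) * exp (2 * arctan (a * (t - c)))) t := by
  have hlin : HasDerivAt (fun s ↦ a * (s - c)) a t := by
    simpa using ((hasDerivAt_id t).sub_const c).const_mul a
  convert (hlin.arctan.const_mul 2).exp using 1
  ring

lemma le_mul_one_add_sq_add_two_mul_div {a K : ℝ} (ha : 0 < a) (hK : 1 ≤ K) (x : ℝ) :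
    a ≤ a ^ 3 * K * (1 + x ^ 2) + 2 * a / (a ^ 2 * x ^ 2 + 1) := by
  have hden : 0 < a ^ 2 * x ^ 2 + 1 := by positivity
  rcases le_or_gt (a ^ 2 * x ^ 2) 1 with hsmall | hlarge
  · have : a ≤ 2 * a / (a ^ 2 * x ^ 2 + 1) := by
      rw [le_div_iff₀ hden]; nlinarith
    have : 0 ≤ a ^ 3 * K * (1 + x ^ 2) := by positivity
    linarith
  · have : a ≤ a ^ 3 * K * (1 + x ^ 2) := by
      calc a = a * 1 := (mul_one a).symm
        _ ≤ a * (a ^ 2 * x ^ 2) := by gcongr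
        _ = a ^ 3 * 1 * (0 + x ^ 2) := by ring
        _ ≤ a ^ 3 * K * (1 + x ^ 2) := by gcongr; norm_num
    have : 0 ≤ 2 * a / (a ^ 2 * x ^ 2 + 1) := by positivity
    linarith

lemma rpow_two_div_three_eq_sq {ν : ℝ} (hν : 0 ≤ ν) :
    ν ^ ((2 : ℝ) / 3) = (ν ^ ((1 : ℝ) / 3)) ^ 2 := by
  rw [← rpow_natCast, ← rpow_mul hν]
  norm_num

lemma rpow_one_div_three_pow_three {ν : ℝ} (hν : 0 ≤ ν) : (ν ^ ((1 : ℝ) / 3)) ^ 3 = ν := by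
  rw [← rpow_natCast, ← rpow_mul hν]
  norm_num

lemma sub_mul_sq_eq_sq_mul_sub_div_sq {k : ℝ} (hk : k ≠ 0) (η t : ℝ) :
    (η - k * t) ^ 2 = k ^ 2 * (t - η / k) ^ 2 := by
  field_simp
  ring

lemma Int.one_le_cast_sq {k : ℤ} (hk : k ≠ 0) : (1 : ℝ) ≤ (k : ℝ) ^ 2 := by
  rw [one_le_sq_iff_one_le_abs, ← Int.cast_abs]
  exact_mod_cast Int.one_le_abs hk

theorem stmt_9_general (ν : ℝ) (hν : 0 < ν) (k : ℤ) (hk : k ≠ 0)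
    (η t : ℝ) :
    Real.exp (-Real.pi) ≤ Real.exp (2 * Real.arctan (ν ^ ((1 : ℝ) / 3) * (t - η / k))) ∧
    Real.exp (2 * Real.arctan (ν ^ ((1 : ℝ) / 3) * (t - η / k))) ≤ Real.exp Real.pi ∧
    HasDerivAt (fun s : ℝ => Real.exp (2 * Real.arctan (ν ^ ((1 : ℝ) / 3) * (s - η / k))))
      ((2 * ν ^ ((1 : ℝ) / 3) / (ν ^ ((2 : ℝ) / 3) * (t - η / k) ^ 2 + 1)) *
        Real.exp (2 * Real.arctan (ν ^ ((1 : ℝ) / 3) * (t - η / k)))) t ∧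
    ν * ((k : ℝ) ^ 2 + (η - k * t) ^ 2) +
        2 * ν ^ ((1 : ℝ) / 3) / (ν ^ ((2 : ℝ) / 3) * (t - η / k) ^ 2 + 1) ≥
      ν ^ ((1 : ℝ) / 3) := by
  have hp : ν * ((k : ℝ) ^ 2 + (η - k * t) ^ 2)
      = (ν ^ ((1 : ℝ) / 3)) ^ 3 * (k : ℝ) ^ 2 * (1 + (t - η / k) ^ 2) := by
    rw [rpow_one_div_three_pow_three hν.le, sub_mul_sq_eq_sq_mul_sub_div_sq (by exact_mod_cast hk)]
    ring
  rw [rpow_two_div_three_eq_sq hν.le, hp]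
  exact ⟨exp_neg_pi_le_exp_two_mul_arctan _, exp_two_mul_arctan_le_exp_pi _,
    hasDerivAt_exp_two_mul_arctan_mul_sub _ _ _,
    le_mul_one_add_sq_add_two_mul_div (rpow_pos_of_pos hν _) (Int.one_le_cast_sq hk) _⟩

/-- The multiplier `m(t) = exp(2 arctan(ν^{1/3}(t − η/k)))` satisfies:
(i) `e^{−π} ≤ m ≤ e^{π}`; (ii) `∂ₜm = (2ν^{1/3}/(ν^{2/3}(t−η/k)²+1))·m`;
(iii) `νp + ∂ₜm/m ≥ ν^{1/3}`. -/
theorem stmt_9 (ν : ℝ) (hν : 0 < ν) (hν1 : ν ≤ 1) (k : ℤ) (hk : k ≠ 0)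
    (η t : ℝ) (ht : 0 ≤ t) :
    Real.exp (-Real.pi) ≤ Real.exp (2 * Real.arctan (ν ^ ((1 : ℝ) / 3) * (t - η / k))) ∧
    Real.exp (2 * Real.arctan (ν ^ ((1 : ℝ) / 3) * (t - η / k))) ≤ Real.exp Real.pi ∧
    HasDerivAt (fun s : ℝ => Real.exp (2 * Real.arctan (ν ^ ((1 : ℝ) / 3) * (s - η / k))))
      ((2 * ν ^ ((1 : ℝ) / 3) / (ν ^ ((2 : ℝ) / 3) * (t - η / k) ^ 2 + 1)) *
        Real.exp (2 * Real.arctan (ν ^ ((1 : ℝ) / 3) * (t - η / k)))) t ∧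
    ν * ((k : ℝ) ^ 2 + (η - k * t) ^ 2) +
        2 * ν ^ ((1 : ℝ) / 3) / (ν ^ ((2 : ℝ) / 3) * (t - η / k) ^ 2 + 1) ≥
      ν ^ ((1 : ℝ) / 3) :=
  stmt_9_general ν hν k hk η t
end

section
/- With w as defined (piecewise, with ∂ₜw/w = ∂ₜp/p on the interval [η/k, η/k + βν^{−1/3}] and ∂ₜw = 0 elsewhere) and m(t,k,η) = exp(2 arctan(ν^{1/3}(t − η/k))), for any δ with max{2/(β(β²−1)), 4/β} < δ ≤ 1: (i) δ(∂ₜm/m + νp) + ∂ₜw/w − ∂ₜp/p ≥ δν^{1/3}, and (ii) δ(∂ₜm/m + ν^{1/3}) + ∂ₜw/w − ∂ₜp/p ≥ (δ/2)ν^{1/3}, for all t ≥ 0, k ∈ ℤ\{0}, η ∈ ℝ. -/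
set_option maxHeartbeats 2000000 in
/-- With `∂ₜw/w = (∂ₜp/p)·𝟙_{[η/k, η/k+βν^{−1/3}]}` and
`∂ₜm/m = 2ν^{1/3}/(ν^{2/3}(t−η/k)²+1)`, for `max{2/(β(β²−1)), 4/β} < δ ≤ 1`:
(i) `δ(∂ₜm/m + νp) + ∂ₜw/w − ∂ₜp/p ≥ δν^{1/3}`;
(ii) `δ(∂ₜm/m + ν^{1/3}) + ∂ₜw/w − ∂ₜp/p ≥ (δ/2)ν^{1/3}`. -/
theorem stmt_12 (ν β δ : ℝ) (hν : 0 < ν) (hν1 : ν ≤ 1) (hβ : 2 < β)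
    (hδ₁ : max (2 / (β * (β ^ 2 - 1))) (4 / β) < δ) (hδ₂ : δ ≤ 1)
    (k : ℤ) (hk : k ≠ 0) (η : ℝ) :
    ∀ t : ℝ, 0 ≤ t →
      (δ * (2 * ν ^ ((1 : ℝ) / 3) / (ν ^ ((2 : ℝ) / 3) * (t - η / k) ^ 2 + 1) +
            ν * ((k : ℝ) ^ 2 + (η - k * t) ^ 2)) +
          ((if t ∈ Set.Icc (η / k) (η / k + β * ν ^ (-(1 : ℝ) / 3)) then
              (-2 * (k : ℝ) * (η - k * t)) / ((k : ℝ) ^ 2 + (η - k * t) ^ 2)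
            else 0)) -
          (-2 * (k : ℝ) * (η - k * t)) / ((k : ℝ) ^ 2 + (η - k * t) ^ 2) ≥
        δ * ν ^ ((1 : ℝ) / 3)) ∧
      (δ * (2 * ν ^ ((1 : ℝ) / 3) / (ν ^ ((2 : ℝ) / 3) * (t - η / k) ^ 2 + 1) +
            ν ^ ((1 : ℝ) / 3)) +
          ((if t ∈ Set.Icc (η / k) (η / k + β * ν ^ (-(1 : ℝ) / 3)) then
              (-2 * (k : ℝ) * (η - k * t)) / ((k : ℝ) ^ 2 + (η - k * t) ^ 2)
            else 0)) -
          (-2 * (k : ℝ) * (η - k * t)) / ((k : ℝ) ^ 2 + (η - k * t) ^ 2) ≥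
        (δ / 2) * ν ^ ((1 : ℝ) / 3)) := by
  have hβ0 : (0:ℝ) < β := by linarith
  have hβ1 : (0:ℝ) < β ^ 2 - 1 := by nlinarith
  have hδ4 : 4 / β < δ := lt_of_le_of_lt (le_max_right _ _) hδ₁
  have hδ2' : 2 / (β * (β ^ 2 - 1)) < δ := lt_of_le_of_lt (le_max_left _ _) hδ₁
  have hδpos : 0 < δ := lt_trans (by positivity) hδ4
  set a : ℝ := ν ^ ((1:ℝ)/3) with haa
  have ha : 0 < a := Real.rpow_pos_of_pos hν _
  have ha1 : a ≤ 1 := Real.rpow_le_one hν.le hν1 (by norm_num)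
  have ha2 : ν ^ ((2:ℝ)/3) = a ^ 2 := by
    rw [haa, ← Real.rpow_natCast (ν ^ ((1:ℝ)/3)) 2, ← Real.rpow_mul hν.le]; norm_num
  have ha3 : ν = a ^ 3 := by
    rw [haa, ← Real.rpow_natCast (ν ^ ((1:ℝ)/3)) 3, ← Real.rpow_mul hν.le]; norm_num
  have hainv : ν ^ (-(1:ℝ)/3) = a⁻¹ := by
    rw [haa, show (-(1:ℝ)/3) = -(1/3) by norm_num, Real.rpow_neg hν.le]
  have hkne : (k:ℝ) ≠ 0 := Int.cast_ne_zero.mpr hk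
  have hk2 : (1:ℝ) ≤ (k:ℝ) ^ 2 := by
    have h1 : (1:ℤ) ≤ k ^ 2 := by rcases lt_or_gt_of_ne hk with h | h <;> nlinarith
    exact_mod_cast h1
  -- key derived δ inequalities
  have hkey1 : 2 / β ≤ δ * (β ^ 2 - 1) := by
    rw [div_le_iff₀ hβ0]
    have h2 : 2 < δ * (β * (β ^ 2 - 1)) := (div_lt_iff₀ (by positivity)).mp hδ2'
    nlinarith
  have hkey2 : 2 / β ≤ δ / 2 := by
    have h4 : (4:ℝ) / β = 2 * (2 / β) := by ring
    linarith [hδ4, h4.symm.le, h4.le]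
  intro t ht
  set s : ℝ := t - η / (k:ℝ) with hsdef
  have hηs : η - (k:ℝ) * t = -((k:ℝ) * s) := by
    rw [hsdef]; field_simp; ring
  have hD1 : (0:ℝ) < 1 + s ^ 2 := by positivity
  have hDm : (0:ℝ) < a ^ 2 * s ^ 2 + 1 := by positivity
  have hP : (-2 * (k:ℝ) * (η - (k:ℝ) * t)) / ((k:ℝ) ^ 2 + (η - (k:ℝ) * t) ^ 2)
      = 2 * s / (1 + s ^ 2) := by
    rw [hηs, show (-2 * (k:ℝ) * (-((k:ℝ) * s))) = (k:ℝ) ^ 2 * (2 * s) by ring,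
      show ((k:ℝ) ^ 2 + (-((k:ℝ) * s)) ^ 2) = (k:ℝ) ^ 2 * (1 + s ^ 2) by ring,
      mul_div_mul_left _ _ (pow_ne_zero 2 hkne)]
  have hPP : ν * ((k:ℝ) ^ 2 + (η - (k:ℝ) * t) ^ 2) = a ^ 3 * ((k:ℝ) ^ 2 * (1 + s ^ 2)) := by
    rw [hηs, ha3]; ring
  rw [hP, hPP, ha2, hainv]
  set M : ℝ := 2 * a / (a ^ 2 * s ^ 2 + 1) with hMdef
  have hM0 : 0 ≤ M := by positivity
  set X : ℝ := a ^ 3 * ((k:ℝ) ^ 2 * (1 + s ^ 2)) with hXdef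
  set P : ℝ := 2 * s / (1 + s ^ 2) with hPdef
  -- m + νp ≥ a
  have hmp : a ≤ M + X := by
    rcases le_or_gt (a ^ 2 * s ^ 2) 1 with h | h
    · have h1 : a ≤ M := by
        rw [hMdef, le_div_iff₀ hDm]; nlinarith
      have h2 : 0 ≤ X := by positivity
      linarith
    · have h2 : a ≤ X := by
        have hx : a * 1 ≤ a * (a ^ 2 * s ^ 2) := mul_le_mul_of_nonneg_left h.le ha.le
        have hk' : s ^ 2 ≤ (k:ℝ) ^ 2 * (1 + s ^ 2) := by nlinarith [sq_nonneg s]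
        have hy : a ^ 3 * s ^ 2 ≤ X := by
          rw [hXdef]; exact mul_le_mul_of_nonneg_left hk' (by positivity)
        nlinarith
      linarith
  by_cases hmem : t ∈ Set.Icc (η / (k:ℝ)) (η / (k:ℝ) + β * a⁻¹)
  · rw [if_pos hmem]
    constructor
    · have := mul_le_mul_of_nonneg_left hmp hδpos.le
      nlinarith
    · have := mul_le_mul_of_nonneg_left hM0 hδpos.le
      nlinarith
  · rw [if_neg hmem]
    rw [Set.mem_Icc, not_and_or, not_le, not_le] at hmem
    rcases hmem with hlt | hlt
    · -- s < 0 : P ≤ 0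
      have hs0 : s < 0 := by rw [hsdef]; linarith [hlt]
      have hPle : P ≤ 0 := div_nonpos_of_nonpos_of_nonneg (by linarith) hD1.le
      constructor
      · have := mul_le_mul_of_nonneg_left hmp hδpos.le
        nlinarith
      · have := mul_le_mul_of_nonneg_left hM0 hδpos.le
        nlinarith
    · -- far case : β/a < s
      have hspos : β * a⁻¹ < s := by rw [hsdef]; linarith [hlt]
      have hβs : β < a * s := by
        have := (div_lt_iff₀ ha).mp (by rw [div_eq_mul_inv]; exact hspos)
        linarith
      have hs0 : 0 < s := by nlinarith [mul_pos hβ0 (inv_pos.mpr ha)]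
      have hPub : P ≤ 2 * a / β := by
        rw [hPdef, div_le_div_iff₀ hD1 hβ0]
        nlinarith [mul_nonneg hs0.le (by linarith : (0:ℝ) ≤ a * s - β)]
      have hXlb : a * β ^ 2 ≤ X := by
        have h1 : β ^ 2 ≤ (a * s) ^ 2 := by nlinarith
        have h2 : a * β ^ 2 ≤ a ^ 3 * (1 + s ^ 2) := by nlinarith [mul_le_mul_of_nonneg_left h1 ha.le]
        have h3 : a ^ 3 * (1 + s ^ 2) ≤ X := by
          nlinarith [mul_nonneg (mul_pos (pow_pos ha 3) hD1).le (sub_nonneg.mpr hk2)]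
        linarith
      constructor
      · have h1 := mul_le_mul_of_nonneg_left hXlb hδpos.le
        have h2 := mul_nonneg hδpos.le hM0
        have h3 : 0 ≤ a * (δ * (β ^ 2 - 1) - 2 / β) :=
          mul_nonneg ha.le (by linarith)
        rw [show a * (δ * (β ^ 2 - 1) - 2 / β)
            = δ * (a * β ^ 2) - δ * a - 2 * a / β by ring] at h3
        have e1 : δ * (M + X) = δ * M + δ * X := by ring
        linarith
      · have h2 := mul_nonneg hδpos.le hM0
        have h3 : 0 ≤ a * (δ / 2 - 2 / β) := mul_nonneg ha.le (by linarith)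
        rw [show a * (δ / 2 - 2 / β) = δ / 2 * a - 2 * a / β by ring] at h3
        have e2 : δ * (M + a) = δ * M + δ * a := by ring
        linarith
end

section
/- Let E : [0,∞) → (0,∞) be differentiable and satisfy E'(t) + νC·K^{−1/ℓ}·E(t)^{1+1/ℓ} ≤ 0 for constants ν, C, K > 0 and integer ℓ ≥ 1, with E(0) ≤ K. Then E(t) ≤ E(0)·(ν C̃ t + 1)^{−ℓ} for all t ≥ 0, where C̃ = (C/ℓ)(E(0)/K)^{1/ℓ}. -/
/-- Nonlinear Grönwall decay: if `E > 0` and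
`E' + νC K^{−1/ℓ} E^{1+1/ℓ} ≤ 0` on `[0,∞)` with `E(0) ≤ K`, then
`E(t) ≤ E(0)(νC̃t + 1)^{−ℓ}`, `C̃ = (C/ℓ)(E(0)/K)^{1/ℓ}`. -/
theorem stmt_14 (E E' : ℝ → ℝ) (ν C K : ℝ) (ℓ : ℕ)
    (hν : 0 < ν) (hC : 0 < C) (hK : 0 < K) (hℓ : 1 ≤ ℓ)
    (hEpos : ∀ t : ℝ, 0 ≤ t → 0 < E t)
    (hE : ∀ t : ℝ, 0 ≤ t → HasDerivAt E (E' t) t)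
    (hE0 : E 0 ≤ K)
    (hineq : ∀ t : ℝ, 0 ≤ t →
      E' t + ν * C * K ^ (-(1 : ℝ) / ℓ) * E t ^ (1 + (1 : ℝ) / ℓ) ≤ 0) :
    ∀ t : ℝ, 0 ≤ t →
      E t ≤ E 0 * (ν * ((C / ℓ) * (E 0 / K) ^ ((1 : ℝ) / ℓ)) * t + 1) ^ (-(ℓ : ℝ)) := by
  intro t ht
  have hℓR : (1 : ℝ) ≤ (ℓ : ℝ) := by exact_mod_cast hℓ
  have hℓpos : (0 : ℝ) < ℓ := by linarith
  have hℓne : (ℓ : ℝ) ≠ 0 := ne_of_gt hℓpos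
  set p : ℝ := -(1 : ℝ) / ℓ with hp
  have hpneg : p < 0 := by
    rw [hp]
    exact div_neg_of_neg_of_pos (by norm_num) hℓpos
  set c : ℝ := ν * C * K ^ p / ℓ with hc
  have hKp : (0 : ℝ) < K ^ p := Real.rpow_pos_of_pos hK _
  have hcpos : 0 < c := by positivity
  -- derivative lower bound for E^p
  have key : ∀ x : ℝ, 0 ≤ x → c ≤ E' x * p * E x ^ (p - 1) := by
    intro x hx
    have hEx : 0 < E x := hEpos x hx
    have h1 := hineq x hx
    have hE' : E' x ≤ -(ν * C * K ^ p * E x ^ (1 + (1 : ℝ) / ℓ)) := by linarith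
    have hq : p * E x ^ (p - 1) ≤ 0 :=
      (mul_nonpos_of_nonpos_of_nonneg hpneg.le (Real.rpow_pos_of_pos hEx _).le)
    have h2 := mul_le_mul_of_nonpos_right hE' hq
    have hmul : E x ^ (1 + (1 : ℝ) / ℓ) * E x ^ (p - 1) = 1 := by
      rw [← Real.rpow_add hEx]
      have : (1 + (1 : ℝ) / ℓ) + (p - 1) = 0 := by
        rw [hp]; field_simp; ring
      rw [this, Real.rpow_zero]
    have h3 : -(ν * C * K ^ p * E x ^ (1 + (1 : ℝ) / ℓ)) * (p * E x ^ (p - 1))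
        = ν * C * K ^ p * (E x ^ (1 + (1 : ℝ) / ℓ) * E x ^ (p - 1)) * (-p) := by
      ring
    have h4 : -(ν * C * K ^ p * E x ^ (1 + (1 : ℝ) / ℓ)) * (p * E x ^ (p - 1)) = c := by
      rw [h3, hmul, hc, hp]; field_simp
    calc c = -(ν * C * K ^ p * E x ^ (1 + (1 : ℝ) / ℓ)) * (p * E x ^ (p - 1)) := h4.symm
      _ ≤ E' x * (p * E x ^ (p - 1)) := h2
      _ = E' x * p * E x ^ (p - 1) := by ring
  -- H = E^p - c·x is monotone on [0,∞)
  set H : ℝ → ℝ := fun x => E x ^ p - c * x with hH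
  have hHderiv : ∀ x : ℝ, 0 ≤ x →
      HasDerivAt H (E' x * p * E x ^ (p - 1) - c) x := by
    intro x hx
    have h1 : HasDerivAt (fun y => E y ^ p) (E' x * p * E x ^ (p - 1)) x :=
      (hE x hx).rpow_const (Or.inl (ne_of_gt (hEpos x hx)))
    have h2 : HasDerivAt (fun y => c * y) c x := by
      simpa using (hasDerivAt_id x).const_mul c
    exact h1.sub h2
  have hmono : MonotoneOn H (Set.Ici (0 : ℝ)) := by
    apply monotoneOn_of_deriv_nonneg (convex_Ici 0)
    · intro x hx
      exact (hHderiv x hx).continuousAt.continuousWithinAt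
    · intro x hx
      rw [interior_Ici] at hx
      exact (hHderiv x (le_of_lt hx)).differentiableAt.differentiableWithinAt
    · intro x hx
      rw [interior_Ici] at hx
      rw [(hHderiv x hx.le).deriv]
      linarith [key x hx.le]
  have hH0 : H 0 ≤ H t := hmono (Set.self_mem_Ici) ht ht
  have hF : E 0 ^ p + c * t ≤ E t ^ p := by
    simp only [hH, mul_zero, sub_zero] at hH0
    linarith
  have hE0pos : 0 < E 0 := hEpos 0 le_rfl
  have hApos : 0 < E 0 ^ p + c * t := by
    have := Real.rpow_pos_of_pos hE0pos p
    nlinarith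
  have hp1 : p * -(ℓ : ℝ) = 1 := by rw [hp]; field_simp
  -- E t = (E t ^ p) ^ (-ℓ)
  have hEt : E t = (E t ^ p) ^ (-(ℓ : ℝ)) := by
    rw [← Real.rpow_mul (hEpos t ht).le, hp1, Real.rpow_one]
  have hE0eq : (E 0 ^ p) ^ (-(ℓ : ℝ)) = E 0 := by
    rw [← Real.rpow_mul hE0pos.le, hp1, Real.rpow_one]
  have hle : (E t ^ p) ^ (-(ℓ : ℝ)) ≤ (E 0 ^ p + c * t) ^ (-(ℓ : ℝ)) :=
    Real.rpow_le_rpow_of_nonpos hApos hF (neg_nonpos.mpr (by positivity))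
  have hK1 : (K ^ ((1 : ℝ) / ℓ)) ≠ 0 := (Real.rpow_pos_of_pos hK _).ne'
  have hfac : E 0 ^ p + c * t
      = E 0 ^ p * (ν * ((C / ℓ) * (E 0 / K) ^ ((1 : ℝ) / ℓ)) * t + 1) := by
    have h1 : (E 0 / K) ^ ((1 : ℝ) / ℓ) = E 0 ^ ((1 : ℝ) / ℓ) / K ^ ((1 : ℝ) / ℓ) :=
      Real.div_rpow hE0pos.le hK.le _
    have h2 : E 0 ^ p * E 0 ^ ((1 : ℝ) / ℓ) = 1 := by
      rw [← Real.rpow_add hE0pos]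
      have : p + (1 : ℝ) / ℓ = 0 := by rw [hp]; ring
      rw [this, Real.rpow_zero]
    have h3 : K ^ p = (K ^ ((1 : ℝ) / ℓ))⁻¹ := by
      rw [hp, neg_div, Real.rpow_neg hK.le]
    rw [h1, hc, h3]
    linear_combination (-(ν * C * (K ^ ((1 : ℝ) / (ℓ : ℝ)))⁻¹ / (ℓ : ℝ) * t)) * h2
  have hXnn : 0 ≤ ν * ((C / ℓ) * (E 0 / K) ^ ((1 : ℝ) / ℓ)) * t + 1 := by positivity
  calc E t = (E t ^ p) ^ (-(ℓ : ℝ)) := hEt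
    _ ≤ (E 0 ^ p + c * t) ^ (-(ℓ : ℝ)) := hle
    _ = (E 0 ^ p * (ν * ((C / ℓ) * (E 0 / K) ^ ((1 : ℝ) / ℓ)) * t + 1)) ^ (-(ℓ : ℝ)) := by
        rw [hfac]
    _ = (E 0 ^ p) ^ (-(ℓ : ℝ)) * (ν * ((C / ℓ) * (E 0 / K) ^ ((1 : ℝ) / ℓ)) * t + 1) ^ (-(ℓ : ℝ)) :=
        Real.mul_rpow (Real.rpow_pos_of_pos hE0pos _).le hXnn
    _ = E 0 * (ν * ((C / ℓ) * (E 0 / K) ^ ((1 : ℝ) / ℓ)) * t + 1) ^ (-(ℓ : ℝ)) := by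
        rw [hE0eq]
end
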